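/- For every z on the unit circle (z = e^{iφ}) and every θ ∈ (0,1), the integral of |1-ζ²|^{-1/2} over the Carleson box S_θ(z) = {re^{it} : 1-θ ≤ r < 1, |t-φ| ≤ θ} with respect to normalized area measure is at most 2θ. Consequently, |1-ζ²|^{-1/2} dA(ζ) is a Carleson measure for the Hardy space H² of the unit disc. -/

import Mathlib

/-!
In polar coordinates `ζ = r e^{it}` the box is the image of the rectangle
`[1-θ, 1) × [φ-θ, φ+θ]`, on which the polar map is injective since `2θ < 2π`, and
`dA = r dr dt / π`. On the box `|1 - ζ²| ≥ 1 - r`, so the integral is at most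
`(2θ / π) ∫_{1-θ}^1 (1-r)^{-1/2} dr = 4θ√θ / π ≤ 2θ`.
-/

open MeasureTheory Complex

/-- The Carleson box `S_θ(e^{iφ}) = {r e^{it} : 1-θ ≤ r < 1, |t-φ| ≤ θ}`. -/
def carlesonBox (φ θ : ℝ) : Set ℂ :=
  (fun p : ℝ × ℝ => (p.1 : ℂ) * Complex.exp (p.2 * Complex.I)) ''
    (Set.Ico (1 - θ) 1 ×ˢ Set.Icc (φ - θ) (φ + θ))

/-- Area measure on `ℂ`, normalized so that the unit disc has measure `1`. -/
noncomputable def normArea : Measure ℂ := (ENNReal.ofReal Real.pi)⁻¹ • volume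

open Set Real ENNReal

theorem Complex.injOn_polarCoord_symm_Ioi_prod_Icc {a b : ℝ} (h : b - a < 2 * π) :
    InjOn Complex.polarCoord.symm (Ioi 0 ×ˢ Icc a b) := by
  rintro ⟨r, t⟩ ⟨hr : 0 < r, ht⟩ ⟨s, u⟩ ⟨hs : 0 < s, hu⟩ heq
  have hrs : r = s := by
    simpa [abs_of_pos hr, abs_of_pos hs] using congrArg norm heq
  subst hrs
  have hexp : Circle.exp t = Circle.exp u := by
    ext
    simp only [Complex.polarCoord_symm_apply] at heq
    rw [Circle.coe_exp, Circle.coe_exp, exp_mul_I, exp_mul_I, ← ofReal_cos, ← ofReal_sin,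
      ← ofReal_cos, ← ofReal_sin]
    exact mul_left_cancel₀ (ofReal_ne_zero.2 (ne_of_gt hr)) heq
  exact Prod.ext rfl (Circle.exp_injOn_Icc h ht hu hexp)

theorem Complex.setLIntegral_image_polarCoord_symm {s : Set (ℝ × ℝ)} (hs : MeasurableSet s)
    (hinj : InjOn Complex.polarCoord.symm s) (f : ℂ → ℝ≥0∞) :
    ∫⁻ ζ in Complex.polarCoord.symm '' s, f ζ =
      ∫⁻ p in s, ENNReal.ofReal |p.1| * f (Complex.polarCoord.symm p) := by
  have himage : Complex.polarCoord.symm '' s =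
      measurableEquivRealProd.symm '' (polarCoord.symm '' s) := by
    rw [← image_comp]; rfl
  rw [himage, ← (volume_preserving_equiv_real_prod.symm).setLIntegral_comp_emb
    measurableEquivRealProd.symm.measurableEmbedding,
    lintegral_image_eq_lintegral_abs_det_fderiv_mul volume hs
      (fun p _ ↦ (hasFDerivAt_polarCoord_symm p).hasFDerivWithinAt)
      (InjOn.of_comp (f := polarCoord.symm) (g := measurableEquivRealProd.symm) hinj)]
  simp_rw [det_fderivPolarCoordSymm]
  rfl

theorem carlesonBox_eq_image_polarCoord_symm (φ θ : ℝ) :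
    carlesonBox φ θ = Complex.polarCoord.symm '' (Ico (1 - θ) 1 ×ˢ Icc (φ - θ) (φ + θ)) := by
  refine image_congr fun p _ ↦ ?_
  rw [Complex.polarCoord_symm_apply, exp_mul_I, ← ofReal_cos, ← ofReal_sin]

theorem one_sub_norm_le_norm_one_sub_sq {R : Type*} [SeminormedRing R] [NormOneClass R]
    {x : R} (hx : ‖x‖ ≤ 1) : 1 - ‖x‖ ≤ ‖1 - x ^ 2‖ := by
  have h := norm_sub_norm_le (1 : R) (x ^ 2)
  have hsq : ‖x ^ 2‖ ≤ ‖x‖ := (norm_pow_le' x two_pos).trans (by nlinarith [norm_nonneg x])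
  rw [norm_one] at h
  linarith

theorem lintegral_Ico_one_sub_rpow {s θ : ℝ} (hs : -1 < s) (hθ : 0 ≤ θ) :
    ∫⁻ r in Ico (1 - θ) 1, ENNReal.ofReal ((1 - r) ^ s) =
      ENNReal.ofReal (θ ^ (s + 1) / (s + 1)) := by
  have hshift : ∫⁻ r in Ico (1 - θ) 1, ENNReal.ofReal ((1 - r) ^ s) =
      ∫⁻ x in Ioc 0 θ, ENNReal.ofReal (x ^ s) := by
    have hpre : Ico (1 - θ) 1 = (fun r : ℝ ↦ 1 - r) ⁻¹' Ioc 0 θ := by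
      rw [preimage_const_sub_Ioc, sub_zero]
    rw [hpre]
    exact (Measure.measurePreserving_sub_left volume (1 : ℝ)).setLIntegral_comp_preimage
      measurableSet_Ioc (f := fun x ↦ ENNReal.ofReal (x ^ s)) (by fun_prop)
  have hint : IntegrableOn (fun x : ℝ ↦ x ^ s) (Ioc 0 θ) :=
    (intervalIntegral.intervalIntegrable_rpow' hs).1
  rw [hshift, ← ofReal_integral_eq_lintegral_ofReal hint, ← intervalIntegral.integral_of_le hθ,
    integral_rpow (Or.inl hs), zero_rpow (by linarith), sub_zero]
  filter_upwards [ae_restrict_mem measurableSet_Ioc] with x hx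
  exact rpow_nonneg hx.1.le s

theorem setLIntegral_carlesonBox_le {φ θ : ℝ} (hθ0 : 0 ≤ θ) (hθ1 : θ < 1) :
    ∫⁻ ζ in carlesonBox φ θ, ENNReal.ofReal (‖1 - ζ ^ 2‖ ^ (-(1 / 2) : ℝ)) ≤
      ENNReal.ofReal π * ENNReal.ofReal (2 * θ) := by
  set R := Ico (1 - θ) 1 ×ˢ Icc (φ - θ) (φ + θ)
  have hinj : InjOn Complex.polarCoord.symm R :=
    (Complex.injOn_polarCoord_symm_Ioi_prod_Icc (by linarith [pi_gt_three])).mono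
      (prod_mono (fun r hr ↦ show 0 < r by linarith [hr.1]) subset_rfl)
  have hweight : ∀ p ∈ R, ENNReal.ofReal |p.1| *
      ENNReal.ofReal (‖1 - Complex.polarCoord.symm p ^ 2‖ ^ (-(1 / 2) : ℝ)) ≤
      ENNReal.ofReal ((1 - p.1) ^ (-(1 / 2) : ℝ)) := by
    rintro ⟨r, t⟩ ⟨⟨hr0 : 1 - θ ≤ r, hr1 : r < 1⟩, -⟩
    have hnorm : ‖Complex.polarCoord.symm (r, t)‖ = r := by
      rw [Complex.norm_polarCoord_symm, abs_of_nonneg (by linarith)]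
    have hlower := one_sub_norm_le_norm_one_sub_sq (x := Complex.polarCoord.symm (r, t))
      (hnorm.le.trans hr1.le)
    rw [hnorm] at hlower
    refine (mul_le_of_le_one_left' ?_).trans (ofReal_le_ofReal ?_)
    · exact ENNReal.ofReal_le_one.2 (abs_le.2 ⟨by linarith, hr1.le⟩)
    · exact rpow_le_rpow_of_nonpos (by linarith) hlower (by norm_num)
  rw [carlesonBox_eq_image_polarCoord_symm, Complex.setLIntegral_image_polarCoord_symm
    (measurableSet_Ico.prod measurableSet_Icc) hinj]
  calc _ ≤ ∫⁻ p in R, ENNReal.ofReal ((1 - p.1) ^ (-(1 / 2) : ℝ)) :=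
        setLIntegral_mono (by fun_prop) hweight
    _ = (∫⁻ r in Ico (1 - θ) 1, ENNReal.ofReal ((1 - r) ^ (-(1 / 2) : ℝ))) *
          volume (Icc (φ - θ) (φ + θ)) := by
        rw [Measure.volume_eq_prod, setLIntegral_prod _ (by fun_prop)]
        simp_rw [setLIntegral_const]
        exact lintegral_mul_const _ (by fun_prop)
    _ = ENNReal.ofReal (2 * θ ^ (1 / 2 : ℝ)) * ENNReal.ofReal (2 * θ) := by
        rw [lintegral_Ico_one_sub_rpow (by norm_num) hθ0, Real.volume_Icc,
          show (-(1 / 2) : ℝ) + 1 = 1 / 2 by norm_num]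
        congr 2 <;> ring
    _ ≤ ENNReal.ofReal π * ENNReal.ofReal (2 * θ) := by
        gcongr
        linarith [rpow_le_one hθ0 hθ1.le (by norm_num : (0 : ℝ) ≤ 1 / 2), pi_gt_three]

instance : SFinite normArea := by
  unfold normArea
  infer_instance

theorem setLIntegral_carlesonBox_normArea_le {φ θ : ℝ} (hθ0 : 0 ≤ θ) (hθ1 : θ < 1) :
    ∫⁻ ζ in carlesonBox φ θ, ENNReal.ofReal (‖1 - ζ ^ 2‖ ^ (-(1 / 2) : ℝ)) ∂normArea ≤
      ENNReal.ofReal (2 * θ) := by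
  rw [normArea, Measure.restrict_smul, lintegral_smul_measure, smul_eq_mul,
    ENNReal.inv_mul_le_iff (by simp [pi_pos]) ofReal_ne_top]
  exact setLIntegral_carlesonBox_le hθ0 hθ1

/-- For every `z = e^{iφ}` on the unit circle and every `θ ∈ (0,1)`, the integral of
`|1-ζ²|^{-1/2}` over the Carleson box `S_θ(z)` with respect to normalized area measure
is at most `2θ`; consequently `|1-ζ²|^{-1/2} dA(ζ)` is a Carleson measure for the Hardy
space `H²` of the unit disc. -/
theorem stmt_0 :
    (∀ φ θ : ℝ, 0 < θ → θ < 1 →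
      ∫⁻ ζ in carlesonBox φ θ,
          ENNReal.ofReal (‖1 - ζ ^ 2‖ ^ (-(1 / 2) : ℝ)) ∂normArea ≤
        ENNReal.ofReal (2 * θ)) ∧
    ∃ C : ℝ, ∀ φ θ : ℝ, 0 < θ → θ < 1 →
      (normArea.withDensity fun ζ =>
          ENNReal.ofReal (‖1 - ζ ^ 2‖ ^ (-(1 / 2) : ℝ)))
        (carlesonBox φ θ) ≤ ENNReal.ofReal (C * θ) := by
  refine ⟨fun φ θ hθ0 hθ1 ↦ setLIntegral_carlesonBox_normArea_le hθ0.le hθ1, 2,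
    fun φ θ hθ0 hθ1 ↦ ?_⟩
  rw [withDensity_apply']
  exact setLIntegral_carlesonBox_normArea_le hθ0.le hθ1
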